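/- Let 0 < ν < 1 and let ν₋, ν₊ be real numbers. With g_a(ζ) := sinh((ζ − iπa)/2) / sinh((ζ + iπa)/2), define S_CDD(ζ) := g_{ν−ν₋}(ζ) · g_{ν+ν₊}(ζ) · g_{1−ν+ν₋}(ζ) · g_{1−ν−ν₊}(ζ) and S_CDD^{21}(ζ) := S_CDD(ζ + iπν/2) · S_CDD(ζ − iπν/2). Then the bootstrap identity for the fusion (b₂b₁) → b₁ holds: for all ζ where the expressions are defined, S_CDD(ζ) = S_CDD^{21}(ζ + iπν/2) · S_CDD(ζ − iπ(1 − ν)). Equivalently, S_CDD(w) · S_CDD(w − iπ) = 1 for all admissible w. -/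
import Mathlib


open Complex

/-- The elementary factor g_a(ζ) = sinh((ζ − iπa)/2)/sinh((ζ + iπa)/2). -/
noncomputable def gfac (a : ℝ) (ζ : ℂ) : ℂ :=
  Complex.sinh ((ζ - Complex.I * (Real.pi : ℂ) * (a : ℂ)) / 2) /
  Complex.sinh ((ζ + Complex.I * (Real.pi : ℂ) * (a : ℂ)) / 2)

/-- The CDD factor S_CDD = g_{ν−ν₋} g_{ν+ν₊} g_{1−ν+ν₋} g_{1−ν−ν₊}. -/
noncomputable def SCDD (ν νm νp : ℝ) (ζ : ℂ) : ℂ :=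
  gfac (ν - νm) ζ * gfac (ν + νp) ζ * gfac (1 - ν + νm) ζ * gfac (1 - ν - νp) ζ

/-- The CDD factor for the (b₂b₁) channel:
S_CDD²¹(ζ) = S_CDD(ζ + iπν/2)·S_CDD(ζ − iπν/2). -/
noncomputable def SCDD21 (ν νm νp : ℝ) (ζ : ℂ) : ℂ :=
  SCDD ν νm νp (ζ + Complex.I * (Real.pi : ℂ) * (ν : ℂ) / 2) *
  SCDD ν νm νp (ζ - Complex.I * (Real.pi : ℂ) * (ν : ℂ) / 2)

/-- Admissibility of a point u: none of the numerators or denominators of the four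
CDD factors vanishes at u. -/
def Adm (ν νm νp : ℝ) (u : ℂ) : Prop :=
  ∀ a ∈ ({ν - νm, ν + νp, 1 - ν + νm, 1 - ν - νp} : Set ℝ),
    Complex.sinh ((u - Complex.I * (Real.pi : ℂ) * (a : ℂ)) / 2) ≠ 0 ∧
    Complex.sinh ((u + Complex.I * (Real.pi : ℂ) * (a : ℂ)) / 2) ≠ 0

lemma sinh_sub_pi_I (z : ℂ) : Complex.sinh (z - (Real.pi : ℂ) * Complex.I) = -Complex.sinh z := by
  simp [Complex.sinh_sub, Complex.sinh_mul_I, Complex.cosh_mul_I]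

lemma pair_one (a b : ℝ) (hab : a + b = 1) (w : ℂ)
    (hA : Complex.sinh ((w - Complex.I * (Real.pi : ℂ) * (a : ℂ)) / 2) ≠ 0)
    (hB : Complex.sinh ((w + Complex.I * (Real.pi : ℂ) * (a : ℂ)) / 2) ≠ 0)
    (hC : Complex.sinh ((w - Complex.I * (Real.pi : ℂ) * (b : ℂ)) / 2) ≠ 0)
    (hD : Complex.sinh ((w + Complex.I * (Real.pi : ℂ) * (b : ℂ)) / 2) ≠ 0) :
    gfac a w * gfac b w *
      (gfac a (w - Complex.I * (Real.pi : ℂ)) * gfac b (w - Complex.I * (Real.pi : ℂ))) = 1 := by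
  have hb : (b : ℂ) = 1 - (a : ℂ) := by
    have : b = 1 - a := by linarith
    exact_mod_cast this
  simp only [gfac]
  rw [show (w - Complex.I * (Real.pi : ℂ) - Complex.I * (Real.pi : ℂ) * (a : ℂ)) / 2
      = (w + Complex.I * (Real.pi : ℂ) * (b : ℂ)) / 2 - (Real.pi : ℂ) * Complex.I by
        rw [hb]; ring]
  rw [show (w - Complex.I * (Real.pi : ℂ) + Complex.I * (Real.pi : ℂ) * (a : ℂ)) / 2
      = (w - Complex.I * (Real.pi : ℂ) * (b : ℂ)) / 2 by rw [hb]; ring]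
  rw [show (w - Complex.I * (Real.pi : ℂ) - Complex.I * (Real.pi : ℂ) * (b : ℂ)) / 2
      = (w + Complex.I * (Real.pi : ℂ) * (a : ℂ)) / 2 - (Real.pi : ℂ) * Complex.I by
        rw [hb]; ring]
  rw [show (w - Complex.I * (Real.pi : ℂ) + Complex.I * (Real.pi : ℂ) * (b : ℂ)) / 2
      = (w - Complex.I * (Real.pi : ℂ) * (a : ℂ)) / 2 by rw [hb]; ring]
  rw [sinh_sub_pi_I, sinh_sub_pi_I]
  field_simp

lemma SCDD_unitar (ν νm νp : ℝ) (w : ℂ) (hw : Adm ν νm νp w)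
    (hw' : Adm ν νm νp (w - Complex.I * (Real.pi : ℂ))) :
    SCDD ν νm νp w * SCDD ν νm νp (w - Complex.I * (Real.pi : ℂ)) = 1 := by
  have m1 : (ν - νm) ∈ ({ν - νm, ν + νp, 1 - ν + νm, 1 - ν - νp} : Set ℝ) := by simp
  have m2 : (ν + νp) ∈ ({ν - νm, ν + νp, 1 - ν + νm, 1 - ν - νp} : Set ℝ) := by simp
  have m3 : (1 - ν + νm) ∈ ({ν - νm, ν + νp, 1 - ν + νm, 1 - ν - νp} : Set ℝ) := by
    simp [Set.mem_insert_iff]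
  have m4 : (1 - ν - νp) ∈ ({ν - νm, ν + νp, 1 - ν + νm, 1 - ν - νp} : Set ℝ) := by
    simp [Set.mem_insert_iff]
  have P1 := pair_one (ν - νm) (1 - ν + νm) (by ring) w
    (hw _ m1).1 (hw _ m1).2 (hw _ m3).1 (hw _ m3).2
  have P2 := pair_one (ν + νp) (1 - ν - νp) (by ring) w
    (hw _ m2).1 (hw _ m2).2 (hw _ m4).1 (hw _ m4).2
  simp only [SCDD]
  calc gfac (ν - νm) w * gfac (ν + νp) w * gfac (1 - ν + νm) w * gfac (1 - ν - νp) w *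
        (gfac (ν - νm) (w - Complex.I * (Real.pi : ℂ)) *
          gfac (ν + νp) (w - Complex.I * (Real.pi : ℂ)) *
          gfac (1 - ν + νm) (w - Complex.I * (Real.pi : ℂ)) *
          gfac (1 - ν - νp) (w - Complex.I * (Real.pi : ℂ)))
      = (gfac (ν - νm) w * gfac (1 - ν + νm) w *
          (gfac (ν - νm) (w - Complex.I * (Real.pi : ℂ)) *
            gfac (1 - ν + νm) (w - Complex.I * (Real.pi : ℂ)))) *
        (gfac (ν + νp) w * gfac (1 - ν - νp) w *
          (gfac (ν + νp) (w - Complex.I * (Real.pi : ℂ)) *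
            gfac (1 - ν - νp) (w - Complex.I * (Real.pi : ℂ)))) := by ring
    _ = 1 := by rw [P1, P2, one_mul]

/-- the bootstrap identity for the fusion (b₂b₁) → b₁:
S_CDD(ζ) = S_CDD²¹(ζ + iπν/2)·S_CDD(ζ − iπ(1 − ν)) at admissible points;
equivalently S_CDD(w)·S_CDD(w − iπ) = 1 at admissible w. -/
theorem SCDD_bootstrap (ν : ℝ) (h1 : 0 < ν) (h2 : ν < 1) (νm νp : ℝ) :
    (∀ ζ : ℂ, Adm ν νm νp ζ →
      Adm ν νm νp (ζ + Complex.I * (Real.pi : ℂ) * (ν : ℂ)) →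
      Adm ν νm νp (ζ + Complex.I * (Real.pi : ℂ) * (ν : ℂ) - Complex.I * (Real.pi : ℂ)) →
      SCDD ν νm νp ζ =
        SCDD21 ν νm νp (ζ + Complex.I * (Real.pi : ℂ) * (ν : ℂ) / 2) *
        SCDD ν νm νp (ζ - Complex.I * (Real.pi : ℂ) * ((1 - ν : ℝ) : ℂ))) ∧
    (∀ w : ℂ, Adm ν νm νp w → Adm ν νm νp (w - Complex.I * (Real.pi : ℂ)) →
      SCDD ν νm νp w * SCDD ν νm νp (w - Complex.I * (Real.pi : ℂ)) = 1) := by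
  refine ⟨?_, fun w hw hw' => SCDD_unitar ν νm νp w hw hw'⟩
  intro ζ hζ hζν hζν'
  have key := SCDD_unitar ν νm νp (ζ + Complex.I * (Real.pi : ℂ) * (ν : ℂ)) hζν hζν'
  simp only [SCDD21]
  rw [show ζ + Complex.I * (Real.pi : ℂ) * (ν : ℂ) / 2 + Complex.I * (Real.pi : ℂ) * (ν : ℂ) / 2
      = ζ + Complex.I * (Real.pi : ℂ) * (ν : ℂ) by ring]
  rw [show ζ + Complex.I * (Real.pi : ℂ) * (ν : ℂ) / 2 - Complex.I * (Real.pi : ℂ) * (ν : ℂ) / 2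
      = ζ by ring]
  rw [show ζ - Complex.I * (Real.pi : ℂ) * ((1 - ν : ℝ) : ℂ)
      = ζ + Complex.I * (Real.pi : ℂ) * (ν : ℂ) - Complex.I * (Real.pi : ℂ) by
        push_cast; ring]
  calc SCDD ν νm νp ζ
      = 1 * SCDD ν νm νp ζ := by rw [one_mul]
    _ = SCDD ν νm νp (ζ + Complex.I * (Real.pi : ℂ) * (ν : ℂ)) *
          SCDD ν νm νp (ζ + Complex.I * (Real.pi : ℂ) * (ν : ℂ) - Complex.I * (Real.pi : ℂ)) *
          SCDD ν νm νp ζ := by rw [key]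
    _ = SCDD ν νm νp (ζ + Complex.I * (Real.pi : ℂ) * (ν : ℂ)) * SCDD ν νm νp ζ *
          SCDD ν νm νp (ζ + Complex.I * (Real.pi : ℂ) * (ν : ℂ) - Complex.I * (Real.pi : ℂ)) := by
        ring
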